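/- The orthocenter exists: let A°, B°, C° be linearly independent unit vectors in ℝ³ with cos a = B°⋅C°, cos b = C°⋅A°, cos c = A°⋅B°, and suppose S_A := cos a − cos b cos c, S_B := cos b − cos c cos a, S_C := cos c − cos a cos b are all nonzero. Let A' , B', C' be the duals of the sidelines (A' represented by B°×C°, etc.). Then the three lines A∨A', B∨B', C∨C' are concurrent at the point H with barycentric coordinates [1/S_A : 1/S_B : 1/S_C] with respect to A, B, C (Chasles' theorem). -/

import Mathlib

noncomputable section

/-- Euclidean dot product on `ℝ³`. -/
def dot3 (p q : Fin 3 → ℝ) : ℝ := p 0 * q 0 + p 1 * q 1 + p 2 * q 2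

/-- Cross product on `ℝ³`. -/
def cross3 (p q : Fin 3 → ℝ) : Fin 3 → ℝ :=
  ![p 1 * q 2 - p 2 * q 1, p 2 * q 0 - p 0 * q 2, p 0 * q 1 - p 1 * q 0]

/-- Euclidean norm on `ℝ³`. -/
def norm3 (p : Fin 3 → ℝ) : ℝ := Real.sqrt (dot3 p p)

/-- Determinant of three vectors in `ℝ³` (rows). -/
def det3 (u v w : Fin 3 → ℝ) : ℝ := dot3 u (cross3 v w)

/-- The `∗`-inner product of barycentric coordinate triples, given the cosines
`ca, cb, cc` of the side lengths (the Gram-matrix inner product). -/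
def star3 (ca cb cc : ℝ) (p q : Fin 3 → ℝ) : ℝ :=
  p 0 * q 0 + p 1 * q 1 + p 2 * q 2 + (p 1 * q 2 + p 2 * q 1) * ca
    + (p 2 * q 0 + p 0 * q 2) * cb + (p 0 * q 1 + p 1 * q 0) * cc

/-!
By the vector triple product, `det(A, B×C, X) = (B·X)(C·A) − (A·B)(C·X)`. This vanishes at
`X = A`, and, as `B` and `C` are unit vectors, at `X = B/S_B + C/S_C` it equals
`S_B/S_B − S_C/S_C = 0`. Hence `A∨A'` passes through `H`, and so do the other two lines by
cyclic symmetry.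
-/

open Matrix

lemma dot3_eq_dotProduct (p q : Fin 3 → ℝ) : dot3 p q = p ⬝ᵥ q := by
  rw [dot3, vec3_dotProduct]

lemma cross3_eq_crossProduct (p q : Fin 3 → ℝ) : cross3 p q = p ⨯₃ q := by
  rw [cross3, cross_apply]

lemma det3_cross3 (u v w x : Fin 3 → ℝ) :
    det3 u (cross3 v w) x = dot3 v x * dot3 w u - dot3 v u * dot3 w x := by
  simp only [det3, dot3_eq_dotProduct, cross3_eq_crossProduct]
  rw [triple_product_permutation, cross_dot_cross]

lemma dot3_self_eq_one_of_norm3_eq_one {p : Fin 3 → ℝ} (h : norm3 p = 1) : dot3 p p = 1 := by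
  rw [norm3, Real.sqrt_eq_one] at h
  exact h

lemma det3_cross3_orthocenter_eq_zero {A B C : Fin 3 → ℝ} (hB : dot3 B B = 1)
    (hC : dot3 C C = 1) {SB SC : ℝ} (hSB : SB = dot3 C A - dot3 A B * dot3 B C)
    (hSC : SC = dot3 A B - dot3 B C * dot3 C A) (hSB0 : SB ≠ 0) (hSC0 : SC ≠ 0) (t : ℝ) :
    det3 A (cross3 B C) (t • A + SB⁻¹ • B + SC⁻¹ • C) = 0 := by
  have hB' : SB⁻¹ * (dot3 C A - dot3 A B * dot3 B C) = 1 := hSB ▸ inv_mul_cancel₀ hSB0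
  have hC' : SC⁻¹ * (dot3 A B - dot3 B C * dot3 C A) = 1 := hSC ▸ inv_mul_cancel₀ hSC0
  simp only [det3_cross3, dot3_eq_dotProduct, dotProduct_add, dotProduct_smul, smul_eq_mul,
    dotProduct_comm A B, dotProduct_comm C B] at hB hC hB' hC' ⊢
  rw [hB, hC]
  linear_combination hB' - hC'

theorem orthocenter_exists_general (A B C : Fin 3 → ℝ)
    (hA : norm3 A = 1) (hB : norm3 B = 1) (hC : norm3 C = 1)
    (SA SB SC : ℝ)
    (hSA : SA = dot3 B C - dot3 C A * dot3 A B)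
    (hSB : SB = dot3 C A - dot3 A B * dot3 B C)
    (hSC : SC = dot3 A B - dot3 B C * dot3 C A)
    (hSA0 : SA ≠ 0) (hSB0 : SB ≠ 0) (hSC0 : SC ≠ 0)
    (H : Fin 3 → ℝ) (hH : H = SA⁻¹ • A + SB⁻¹ • B + SC⁻¹ • C) :
    det3 A (cross3 B C) H = 0 ∧ det3 B (cross3 C A) H = 0 ∧
    det3 C (cross3 A B) H = 0 := by
  have hAA := dot3_self_eq_one_of_norm3_eq_one hA
  have hBB := dot3_self_eq_one_of_norm3_eq_one hB
  have hCC := dot3_self_eq_one_of_norm3_eq_one hC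
  have hHB : H = SB⁻¹ • B + SC⁻¹ • C + SA⁻¹ • A := by rw [hH]; abel
  have hHC : H = SC⁻¹ • C + SA⁻¹ • A + SB⁻¹ • B := by rw [hH]; abel
  refine ⟨?_, ?_, ?_⟩
  · rw [hH]; exact det3_cross3_orthocenter_eq_zero hBB hCC hSB hSC hSB0 hSC0 _
  · rw [hHB]; exact det3_cross3_orthocenter_eq_zero hCC hAA hSC hSA hSC0 hSA0 _
  · rw [hHC]; exact det3_cross3_orthocenter_eq_zero hAA hBB hSA hSB hSA0 hSB0 _

/-- Chasles' theorem / existence of the orthocenter: the lines `A∨A'`, `B∨B'`,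
`C∨C'` (joining each vertex to the dual of the opposite sideline) are concurrent
at the point `H = [1/S_A : 1/S_B : 1/S_C]`. -/
theorem orthocenter_exists (A B C : Fin 3 → ℝ)
    (hA : norm3 A = 1) (hB : norm3 B = 1) (hC : norm3 C = 1)
    (hS : det3 A B C ≠ 0)
    (SA SB SC : ℝ)
    (hSA : SA = dot3 B C - dot3 C A * dot3 A B)
    (hSB : SB = dot3 C A - dot3 A B * dot3 B C)
    (hSC : SC = dot3 A B - dot3 B C * dot3 C A)
    (hSA0 : SA ≠ 0) (hSB0 : SB ≠ 0) (hSC0 : SC ≠ 0)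
    (H : Fin 3 → ℝ) (hH : H = SA⁻¹ • A + SB⁻¹ • B + SC⁻¹ • C) :
    det3 A (cross3 B C) H = 0 ∧ det3 B (cross3 C A) H = 0 ∧
    det3 C (cross3 A B) H = 0 :=
  orthocenter_exists_general A B C hA hB hC SA SB SC hSA hSB hSC hSA0 hSB0 hSC0 H hH
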